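/- Assume 0 < σ < 1, 0 < δ < 1, 2σ+1 < δ_u < 3 and max{2, 2δ+1} < δ_b < 3. Suppose that for each q ≥ −1 the functions a^u_q, G^u_q, a^b_q, G^b_q : [t₀, t₀+T] → [0,∞) are measurable, that the Bernstein-type bounds G^u_q(t) ≤ C_B Σ_{p=−1}^{q} λ_p a^u_p(t) and G^b_q(t) ≤ C_B Σ_{p=−1}^{q} λ_p^{1+3/r} a^b_p(t) hold for every q and every t, that the functions t ↦ Λ_u(t) and t ↦ Λ_b(t) (the abstract velocity and magnetic determining wavenumbers computed from (a^u(·,t), G^u(·,t)) and (a^b(·,t), G^b(·,t)) respectively) are measurable, and that e^u_q, e^b_q : [t₀, t₀+T] → [0,∞) are measurable with ⟨Σ_{q≥−1} λ_q² e^u_q⟩ < ∞ and ⟨Σ_{q≥−1} λ_q² e^b_q⟩ < ∞. Assume the intermittency relations ⟨Σ_{q≥−1} λ_q^{−1+δ_u} (a^u_q)²⟩ ≤ C_I ⟨Σ_{q≥−1} λ_q² e^u_q⟩ and ⟨Σ_{q≥−1} λ_q^{−1+δ_b+6/r} (a^b_q)²⟩ ≤ C_I ⟨Σ_{q≥−1}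 λ_q² e^b_q⟩ for some C_I > 0. Define ε_u := ν⟨Σ_{q≥−1} λ_q² e^u_q⟩, κ_u := (ε_u/ν³)^{1/(1+δ_u)}, ε_b := μ⟨Σ_{q≥−1} λ_q² e^b_q⟩, and κ_e := (ε_b/μ³)^{1/(δ_b−1)}. Then there exists a constant C, depending only on L, r, c, σ, δ, δ_u, δ_b, C_B and C_I, such that ⟨Λ_u⟩ ≤ 1 + C·κ_u and ⟨Λ_b⟩ ≤ 1 + C·κ_e. -/

import Mathlib

/-!
Fix a time. If the determining criterion fails at level `q`, then either a single coefficient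
`a_p` with `p > q` is large, or, through the Bernstein bound and Cauchy–Schwarz against a geometric
sum, the modes `p ≤ q` are. In both cases `ν² λ_q^α ≲ Σ_p λ_p^θ a_p²`, where `λ_p^θ a_p²` is the
summand of the intermittency relation and `α = 1 + δ_u` (resp. `δ_b - 1`); hence
`Λ ≤ 1 + 2 (K Σ_p λ_p^θ a_p² / ν²)^{1/α}`. Averaging in time, Jensen's inequality for the concave
power `1/α < 1` and the intermittency relation give `⟨Λ⟩ ≲ 1 + (⟨Σ_p λ_p² e_p⟩ / ν²)^{1/α}`.
-/

open MeasureTheory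
open scoped ENNReal

/-- The admissibility condition at level `q` in the definition of the abstract velocity
determining wavenumber (`λ_q = 2^q`): `(L λ_{p-q})^σ λ_q^{-1} a_p < c ν` for every
integer `p > q`, and `λ_q^{-2} G_q < c ν`. -/
def GoodU (L c ν σ : ℝ) (a G : ℤ → ℝ) (q : ℕ) : Prop :=
  (∀ p : ℤ, (q : ℤ) < p →
      (L * (2:ℝ) ^ (p - (q : ℤ))) ^ σ * ((2:ℝ) ^ (q : ℤ))⁻¹ * a p < c * ν) ∧
    (((2:ℝ) ^ (q : ℤ)) ^ 2)⁻¹ * G q < c * ν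

/-- The abstract velocity determining wavenumber `Λ_u = λ_Q = 2^Q`, where `Q` is the
least admissible natural number; `Λ_u = ∞` if no natural number is admissible. -/
noncomputable def LambdaU (L c ν σ : ℝ) (a G : ℤ → ℝ) : ℝ≥0∞ :=
  sInf {x : ℝ≥0∞ | ∃ q : ℕ, GoodU L c ν σ a G q ∧ x = 2 ^ q}

/-- The admissibility condition at level `q` in the definition of the abstract magnetic
determining wavenumber (`λ_q = 2^q`): `(L λ_{p-q})^δ λ_p^{3/r} a_p < c μ` for every
integer `p > q`, and `λ_q^{-1} G_q < c μ`. -/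
def GoodB (L c μ r δ : ℝ) (a G : ℤ → ℝ) (q : ℕ) : Prop :=
  (∀ p : ℤ, (q : ℤ) < p →
      (L * (2:ℝ) ^ (p - (q : ℤ))) ^ δ * ((2:ℝ) ^ p) ^ (3 / r) * a p < c * μ) ∧
    ((2:ℝ) ^ (q : ℤ))⁻¹ * G q < c * μ

/-- The abstract magnetic determining wavenumber `Λ_b = λ_Q = 2^Q`, where `Q` is the
least admissible natural number; `Λ_b = ∞` if no natural number is admissible. -/
noncomputable def LambdaB (L c μ r δ : ℝ) (a G : ℤ → ℝ) : ℝ≥0∞ :=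
  sInf {x : ℝ≥0∞ | ∃ q : ℕ, GoodB L c μ r δ a G q ∧ x = 2 ^ q}

/-- Time average `⟨f⟩ = (1/T) ∫_{t₀}^{t₀+T} f` of an `ℝ≥0∞`-valued function. -/
noncomputable def timeAvg (t₀ T : ℝ) (f : ℝ → ℝ≥0∞) : ℝ≥0∞ :=
  (∫⁻ t in Set.Icc t₀ (t₀ + T), f t) / ENNReal.ofReal T

/-- Sum over dyadic indices `q ≥ -1` of an `ℝ≥0∞`-valued quantity. -/
noncomputable def sumQ (F : ℤ → ℝ≥0∞) : ℝ≥0∞ :=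
  ∑' n : ℕ, F ((n : ℤ) - 1)

theorem sum_le_sumQ (F : ℤ → ℝ≥0∞) {s : Finset ℤ} (hs : ∀ p ∈ s, -1 ≤ p) :
    ∑ p ∈ s, F p ≤ sumQ F := by
  have hinj : Set.InjOn (fun p : ℤ => (p + 1).toNat) s := fun p hp p' hp' h => by
    have := hs p hp; have := hs p' hp'; simp only at h; omega
  calc ∑ p ∈ s, F p = ∑ p ∈ s, F (((p + 1).toNat : ℤ) - 1) :=
        Finset.sum_congr rfl fun p hp => by
          rw [Int.toNat_of_nonneg (by linarith [hs p hp])]; ring_nf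
    _ = ∑ n ∈ s.image fun p : ℤ => (p + 1).toNat, F ((n : ℕ) - 1 : ℤ) :=
        (Finset.sum_image (f := fun n : ℕ => F ((n : ℤ) - 1)) hinj).symm
    _ ≤ sumQ F := ENNReal.sum_le_tsum (f := fun n : ℕ => F ((n : ℤ) - 1)) _

theorem ofReal_le_mul_sumQ {x M K : ℝ} {F : ℤ → ℝ} {s : Finset ℤ} (hs : ∀ p ∈ s, -1 ≤ p)
    (hF : ∀ p ∈ s, 0 ≤ F p) (hMK : M ≤ K) (h : x ≤ M * ∑ p ∈ s, F p) :
    ENNReal.ofReal x ≤ ENNReal.ofReal K * sumQ fun p => ENNReal.ofReal (F p) := by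
  have hsum : 0 ≤ ∑ p ∈ s, F p := Finset.sum_nonneg hF
  calc ENNReal.ofReal x ≤ ENNReal.ofReal (K * ∑ p ∈ s, F p) :=
        ENNReal.ofReal_le_ofReal (h.trans (mul_le_mul_of_nonneg_right hMK hsum))
    _ = ENNReal.ofReal K * ∑ p ∈ s, ENNReal.ofReal (F p) := by
      rw [ENNReal.ofReal_mul' hsum, ENNReal.ofReal_sum_of_nonneg hF]
    _ ≤ ENNReal.ofReal K * sumQ fun p => ENNReal.ofReal (F p) := by
      gcongr; exact sum_le_sumQ _ hs

theorem measurable_sumQ {F : ℤ → ℝ → ℝ≥0∞} (hF : ∀ q, -1 ≤ q → Measurable (F q)) :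
    Measurable fun t => sumQ fun q => F q t :=
  Measurable.tsum fun n => hF _ (by omega)

theorem sInf_two_pow_le (P : ℕ → Prop) {B : ℝ≥0∞} (hB : ∀ q, ¬ P q → (2 : ℝ≥0∞) ^ q ≤ B) :
    sInf {x : ℝ≥0∞ | ∃ q : ℕ, P q ∧ x = 2 ^ q} ≤ 1 + 2 * B := by
  classical
  by_cases h : ∃ q, P q
  · have hmem : (2 : ℝ≥0∞) ^ Nat.find h ∈ {x : ℝ≥0∞ | ∃ q : ℕ, P q ∧ x = 2 ^ q} :=
      ⟨_, Nat.find_spec h, rfl⟩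
    refine (sInf_le hmem).trans ?_
    rcases Nat.eq_zero_or_eq_succ_pred (Nat.find h) with h0 | hsucc
    · simp [h0]
    · rw [hsucc, pow_succ']
      exact le_add_self.trans' (mul_le_mul_right (hB _ (Nat.find_min h (by omega))) 2)
  · suffices hB' : B = ⊤ by simp [hB']
    by_contra hne
    obtain ⟨n, hn⟩ := ENNReal.exists_nat_gt hne
    have hn2 : (n : ℝ≥0∞) ≤ 2 ^ n := by exact_mod_cast Nat.lt_two_pow_self.le
    exact (hn.trans_le (hn2.trans (hB n fun hP => h ⟨n, hP⟩))).false

theorem two_pow_le_rpow_of_ofReal_le {ν α : ℝ} {X : ℝ≥0∞} {q : ℕ} (hν : 0 < ν) (hα : 0 < α)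
    (h : ENNReal.ofReal (ν ^ 2 * ((2 : ℝ) ^ q) ^ α) ≤ X) :
    (2 : ℝ≥0∞) ^ q ≤ (X / ENNReal.ofReal ν ^ 2) ^ (1 / α) := by
  have hν2 : ENNReal.ofReal ν ^ 2 ≠ 0 := pow_ne_zero _ (by simpa using hν)
  have h' : ENNReal.ofReal (((2 : ℝ) ^ q) ^ α) ≤ X / ENNReal.ofReal ν ^ 2 := by
    rw [ENNReal.le_div_iff_mul_le (Or.inl hν2) (Or.inl (by simp)), ← ENNReal.ofReal_pow hν.le,
      ← ENNReal.ofReal_mul (by positivity), mul_comm]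
    exact h
  calc (2 : ℝ≥0∞) ^ q = ENNReal.ofReal (((2 : ℝ) ^ q) ^ α) ^ (1 / α) := by
        rw [ENNReal.ofReal_rpow_of_nonneg (by positivity) (by positivity),
          ← Real.rpow_mul (by positivity), mul_one_div_cancel hα.ne', Real.rpow_one,
          ENNReal.ofReal_pow zero_le_two, ENNReal.ofReal_ofNat]
    _ ≤ (X / ENNReal.ofReal ν ^ 2) ^ (1 / α) := ENNReal.rpow_le_rpow h' (by positivity)

theorem two_zpow_rpow (p : ℤ) (θ : ℝ) : ((2 : ℝ) ^ p) ^ θ = 2 ^ ((p : ℝ) * θ) :=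
  (Real.rpow_intCast_mul zero_le_two p θ).symm

theorem sq_sum_rpow_mul_le {ι : Type*} (s : Finset ι) {x : ι → ℝ} (hx : ∀ i ∈ s, 0 < x i)
    (a : ι → ℝ) {w β θ : ℝ} (hw : 2 * w = β + θ) :
    (∑ i ∈ s, x i ^ w * a i) ^ 2 ≤ (∑ i ∈ s, x i ^ β) * ∑ i ∈ s, x i ^ θ * a i ^ 2 := by
  have hsplit : ∀ i ∈ s, x i ^ w * a i = x i ^ (β / 2) * (x i ^ (θ / 2) * a i) := fun i hi => by
    rw [← mul_assoc, ← Real.rpow_add (hx i hi)]; congr 2; linarith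
  have hsq : ∀ i ∈ s, ∀ γ : ℝ, (x i ^ (γ / 2)) ^ 2 = x i ^ γ := fun i hi γ => by
    rw [← Real.rpow_mul_natCast (hx i hi).le]; congr 1; push_cast; ring
  calc (∑ i ∈ s, x i ^ w * a i) ^ 2
      = (∑ i ∈ s, x i ^ (β / 2) * (x i ^ (θ / 2) * a i)) ^ 2 := by rw [Finset.sum_congr rfl hsplit]
    _ ≤ (∑ i ∈ s, (x i ^ (β / 2)) ^ 2) * ∑ i ∈ s, (x i ^ (θ / 2) * a i) ^ 2 :=
      Finset.sum_mul_sq_le_sq_mul_sq _ _ _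
    _ = (∑ i ∈ s, x i ^ β) * ∑ i ∈ s, x i ^ θ * a i ^ 2 := by
      congr 1
      · exact Finset.sum_congr rfl fun i hi => hsq i hi β
      · exact Finset.sum_congr rfl fun i hi => by rw [mul_pow, hsq i hi θ]

theorem one_sub_two_rpow_neg_pos {β : ℝ} (hβ : 0 < β) : 0 < 1 - (2 : ℝ) ^ (-β) := by
  linarith [Real.rpow_lt_one_of_one_lt_of_neg one_lt_two (neg_neg_of_pos hβ)]

theorem sum_Icc_two_zpow_rpow_le {β : ℝ} (hβ : 0 < β) (m q : ℤ) :
    ∑ p ∈ Finset.Icc m q, ((2 : ℝ) ^ p) ^ β ≤ (1 - 2 ^ (-β))⁻¹ * ((2 : ℝ) ^ q) ^ β := by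
  set r : ℝ := 2 ^ (-β)
  have hr0 : 0 ≤ r := by positivity
  have hr1 : r < 1 := by linarith [one_sub_two_rpow_neg_pos hβ]
  have hterm : ∀ p ∈ Finset.Icc m q,
      ((2 : ℝ) ^ p) ^ β = ((2 : ℝ) ^ q) ^ β * r ^ (q - p).toNat := fun p hp => by
    have hqp : (((q - p).toNat : ℤ) : ℝ) = q - p := by
      rw [Int.toNat_of_nonneg (by linarith [(Finset.mem_Icc.1 hp).2])]; push_cast; ring
    rw [two_zpow_rpow, two_zpow_rpow, ← Real.rpow_natCast, ← Real.rpow_mul zero_le_two,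
      ← Real.rpow_add two_pos]
    congr 1
    rw [← Int.cast_natCast, hqp]; ring
  have hinj : Set.InjOn (fun p : ℤ => (q - p).toNat) (Finset.Icc m q) := fun p hp p' hp' h => by
    have := (Finset.mem_Icc.1 hp).2; have := (Finset.mem_Icc.1 hp').2; simp only at h; omega
  rw [Finset.sum_congr rfl hterm, ← Finset.mul_sum, mul_comm]
  gcongr
  calc ∑ p ∈ Finset.Icc m q, r ^ (q - p).toNat
      = ∑ n ∈ (Finset.Icc m q).image fun p : ℤ => (q - p).toNat, r ^ n :=
        (Finset.sum_image (f := fun n : ℕ => r ^ n) hinj).symm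
    _ ≤ ∑' n : ℕ, r ^ n :=
      Summable.sum_le_tsum _ (fun n _ => pow_nonneg hr0 n) (summable_geometric_of_lt_one hr0 hr1)
    _ = (1 - r)⁻¹ := tsum_geometric_of_lt_one hr0 hr1

theorem sq_mul_rpow_le_of_far {L c ν s e α θ a : ℝ} {p : ℤ} {q : ℕ} (hc : 0 < c)
    (hν : 0 ≤ ν) (h : c * ν ≤ L ^ s * 2 ^ e * a) (hexp : q * α + 2 * e ≤ p * θ) :
    ν ^ 2 * ((2 : ℝ) ^ q) ^ α ≤ (L ^ s) ^ 2 / c ^ 2 * (((2 : ℝ) ^ p) ^ θ * a ^ 2) := by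
  have hsq : (c * ν) ^ 2 ≤ (L ^ s * 2 ^ e * a) ^ 2 := pow_le_pow_left₀ (by positivity) h 2
  have h2e : ((2 : ℝ) ^ e) ^ 2 = 2 ^ (2 * e) := by
    rw [← Real.rpow_mul_natCast zero_le_two]; ring_nf
  rw [← Real.rpow_natCast_mul zero_le_two, two_zpow_rpow]
  calc ν ^ 2 * 2 ^ (q * α) = (c * ν) ^ 2 * 2 ^ (q * α) / c ^ 2 := by field_simp
    _ ≤ (L ^ s * 2 ^ e * a) ^ 2 * 2 ^ (q * α) / c ^ 2 := by gcongr
    _ = (L ^ s) ^ 2 / c ^ 2 * (2 ^ (q * α + 2 * e) * a ^ 2) := by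
      rw [Real.rpow_add two_pos, ← h2e]; ring
    _ ≤ (L ^ s) ^ 2 / c ^ 2 * (2 ^ (p * θ) * a ^ 2) := by
      gcongr
      norm_num

theorem sq_mul_rpow_le_of_near {c ν CB γ w θ α β : ℝ} (a : ℤ → ℝ) (q : ℕ) (hc : 0 < c)
    (hν : 0 ≤ ν) (hβ : 0 < β) (hw : 2 * w = β + θ) (hα : α + β = 2 * γ)
    (h : c * ν * ((2 : ℝ) ^ q) ^ γ ≤ CB * ∑ p ∈ Finset.Icc (-1 : ℤ) q, ((2 : ℝ) ^ p) ^ w * a p) :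
    ν ^ 2 * ((2 : ℝ) ^ q) ^ α ≤
      CB ^ 2 * (1 - 2 ^ (-β))⁻¹ / c ^ 2 *
        ∑ p ∈ Finset.Icc (-1 : ℤ) q, ((2 : ℝ) ^ p) ^ θ * a p ^ 2 := by
  set S := ∑ p ∈ Finset.Icc (-1 : ℤ) q, ((2 : ℝ) ^ p) ^ θ * a p ^ 2
  have hS : 0 ≤ S := Finset.sum_nonneg fun p _ => by positivity
  have hgeom := sum_Icc_two_zpow_rpow_le hβ (-1) q
  rw [zpow_natCast] at hgeom
  have hCS := sq_sum_rpow_mul_le (Finset.Icc (-1 : ℤ) q) (fun p _ => zpow_pos two_pos p) a hw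
  have hpow : ∀ γ' : ℝ, 0 < ((2 : ℝ) ^ q) ^ γ' := fun _ => by positivity
  have hsplit : ((2 : ℝ) ^ q) ^ α * ((2 : ℝ) ^ q) ^ β = (((2 : ℝ) ^ q) ^ γ) ^ 2 := by
    rw [← Real.rpow_add (by positivity), hα, ← Real.rpow_mul_natCast (by positivity)]; ring_nf
  have key : (ν ^ 2 * ((2 : ℝ) ^ q) ^ α * c ^ 2) * ((2 : ℝ) ^ q) ^ β ≤
      (CB ^ 2 * (1 - 2 ^ (-β))⁻¹ * S) * ((2 : ℝ) ^ q) ^ β :=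
    calc (ν ^ 2 * ((2 : ℝ) ^ q) ^ α * c ^ 2) * ((2 : ℝ) ^ q) ^ β
        = (c * ν * ((2 : ℝ) ^ q) ^ γ) ^ 2 := by
          rw [mul_pow, ← hsplit]; ring
      _ ≤ CB ^ 2 * (∑ p ∈ Finset.Icc (-1 : ℤ) q, ((2 : ℝ) ^ p) ^ w * a p) ^ 2 := by
          rw [← mul_pow]; exact pow_le_pow_left₀ (by positivity) h 2
      _ ≤ CB ^ 2 * ((1 - 2 ^ (-β))⁻¹ * ((2 : ℝ) ^ q) ^ β * S) := by
          gcongr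
          exact hCS.trans (mul_le_mul_of_nonneg_right hgeom hS)
      _ = (CB ^ 2 * (1 - 2 ^ (-β))⁻¹ * S) * ((2 : ℝ) ^ q) ^ β := by ring
  rw [div_mul_eq_mul_div, le_div_iff₀ (by positivity)]
  exact le_of_mul_le_mul_right key (hpow β)

/-- `(L^s)^2 / c^2` controls a violated far-field condition and `CB^2 / (c^2 (1 - 2^{-β}))` a
violated low-mode condition. -/
noncomputable def dyadicConst (L c s CB β : ℝ) : ℝ :=
  ((L ^ s) ^ 2 + CB ^ 2 * (1 - 2 ^ (-β))⁻¹) / c ^ 2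

section DyadicConst

variable {L c s CB β : ℝ}

theorem le_dyadicConst_left (hβ : 0 < β) : (L ^ s) ^ 2 / c ^ 2 ≤ dyadicConst L c s CB β := by
  have := one_sub_two_rpow_neg_pos hβ
  unfold dyadicConst
  gcongr
  exact le_add_of_nonneg_right (by positivity)

theorem le_dyadicConst_right : CB ^ 2 * (1 - 2 ^ (-β))⁻¹ / c ^ 2 ≤ dyadicConst L c s CB β := by
  unfold dyadicConst
  gcongr
  exact le_add_of_nonneg_left (by positivity)

theorem dyadicConst_nonneg (hβ : 0 < β) : 0 ≤ dyadicConst L c s CB β :=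
  (div_nonneg (sq_nonneg _) (sq_nonneg _)).trans (le_dyadicConst_left hβ)

end DyadicConst

section Velocity

variable {L c ν σ δu CB : ℝ} {a G : ℤ → ℝ}

theorem ofReal_le_mul_sumQ_of_not_goodU (hL : 0 ≤ L) (hc : 0 < c) (hν : 0 ≤ ν)
    (hgap : 2 * σ + 1 ≤ δu) (hδu3 : δu < 3)
    (hBern : ∀ n : ℕ, G n ≤ CB * ∑ p ∈ Finset.Icc (-1 : ℤ) n, (2 : ℝ) ^ p * a p) {q : ℕ}
    (hq : ¬ GoodU L c ν σ a G q) :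
    ENNReal.ofReal (ν ^ 2 * ((2 : ℝ) ^ q) ^ (1 + δu)) ≤
      ENNReal.ofReal (dyadicConst L c σ CB (3 - δu)) *
        sumQ fun p => ENNReal.ofReal (((2 : ℝ) ^ p) ^ (-1 + δu) * a p ^ 2) := by
  have hβ : 0 < 3 - δu := by linarith
  rcases not_and_or.1 hq with hfar | hnear
  · push Not at hfar
    obtain ⟨p, hqp, hp⟩ := hfar
    have hqp' : (q : ℝ) ≤ p := by exact_mod_cast hqp.le
    refine ofReal_le_mul_sumQ (s := {p}) (by simp; omega) (by simp; positivity)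
      (le_dyadicConst_left hβ) ?_
    rw [Finset.sum_singleton]
    refine sq_mul_rpow_le_of_far hc hν (e := (p - q) * σ - q) (hp.trans_eq ?_) ?_
    · rw [Real.mul_rpow hL (by positivity), two_zpow_rpow, ← zpow_neg, ← Real.rpow_intCast,
        mul_assoc (L ^ σ), ← Real.rpow_add two_pos]
      push_cast; ring_nf
    · nlinarith [mul_nonneg (sub_nonneg.2 hqp') (sub_nonneg.2 hgap)]
  · push Not at hnear
    rw [zpow_natCast, inv_mul_eq_div, le_div_iff₀ (by positivity)] at hnear
    refine ofReal_le_mul_sumQ (s := Finset.Icc (-1) q) (fun p hp => (Finset.mem_Icc.1 hp).1)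
      (fun p _ => by positivity) le_dyadicConst_right ?_
    refine sq_mul_rpow_le_of_near a q hc hν (γ := 2) (w := 1) hβ (by ring) (by ring) ?_
    simpa [Real.rpow_two, Real.rpow_one] using hnear.trans (hBern q)

theorem LambdaU_le (hL : 0 ≤ L) (hc : 0 < c) (hν : 0 < ν) (hσ : 0 ≤ σ)
    (hgap : 2 * σ + 1 ≤ δu) (hδu3 : δu < 3)
    (hBern : ∀ n : ℕ, G n ≤ CB * ∑ p ∈ Finset.Icc (-1 : ℤ) n, (2 : ℝ) ^ p * a p) :
    LambdaU L c ν σ a G ≤ 1 + 2 *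
      (ENNReal.ofReal (dyadicConst L c σ CB (3 - δu)) *
          (sumQ fun p => ENNReal.ofReal (((2 : ℝ) ^ p) ^ (-1 + δu) * a p ^ 2)) /
        ENNReal.ofReal ν ^ 2) ^ (1 / (1 + δu)) :=
  sInf_two_pow_le _ fun _ hq => two_pow_le_rpow_of_ofReal_le hν (by linarith)
    (ofReal_le_mul_sumQ_of_not_goodU hL hc hν.le hgap hδu3 hBern hq)

end Velocity

section Magnetic

variable {L c μ r δ δb CB : ℝ} {a G : ℤ → ℝ}

theorem ofReal_le_mul_sumQ_of_not_goodB (hL : 0 ≤ L) (hc : 0 < c) (hμ : 0 ≤ μ)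
    (hgap : 2 * δ + 1 ≤ δb) (hδb3 : δb < 3)
    (hBern : ∀ n : ℕ, G n ≤ CB * ∑ p ∈ Finset.Icc (-1 : ℤ) n, ((2 : ℝ) ^ p) ^ (1 + 3 / r) * a p)
    {q : ℕ} (hq : ¬ GoodB L c μ r δ a G q) :
    ENNReal.ofReal (μ ^ 2 * ((2 : ℝ) ^ q) ^ (δb - 1)) ≤
      ENNReal.ofReal (dyadicConst L c δ CB (3 - δb)) *
        sumQ fun p => ENNReal.ofReal (((2 : ℝ) ^ p) ^ (-1 + δb + 6 / r) * a p ^ 2) := by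
  have hβ : 0 < 3 - δb := by linarith
  rcases not_and_or.1 hq with hfar | hnear
  · push Not at hfar
    obtain ⟨p, hqp, hp⟩ := hfar
    have hqp' : (q : ℝ) ≤ p := by exact_mod_cast hqp.le
    refine ofReal_le_mul_sumQ (s := {p}) (by simp; omega) (by simp; positivity)
      (le_dyadicConst_left hβ) ?_
    rw [Finset.sum_singleton]
    refine sq_mul_rpow_le_of_far hc hμ (e := (p - q) * δ + p * (3 / r)) (hp.trans_eq ?_) ?_
    · rw [Real.mul_rpow hL (by positivity), two_zpow_rpow, two_zpow_rpow,
        mul_assoc (L ^ δ), ← Real.rpow_add two_pos]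
      push_cast; ring_nf
    · have h6 : (p : ℝ) * (6 / r) = 2 * (p * (3 / r)) := by ring
      nlinarith [mul_nonneg (sub_nonneg.2 hqp') (sub_nonneg.2 hgap)]
  · push Not at hnear
    rw [zpow_natCast, inv_mul_eq_div, le_div_iff₀ (by positivity)] at hnear
    refine ofReal_le_mul_sumQ (s := Finset.Icc (-1) q) (fun p hp => (Finset.mem_Icc.1 hp).1)
      (fun p _ => by positivity) le_dyadicConst_right ?_
    refine sq_mul_rpow_le_of_near a q hc hμ (γ := 1) (w := 1 + 3 / r) hβ (by ring) (by ring) ?_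
    simpa [Real.rpow_one] using hnear.trans (hBern q)

theorem LambdaB_le (hL : 0 ≤ L) (hc : 0 < c) (hμ : 0 < μ) (hgap : 2 * δ + 1 ≤ δb)
    (h1δb : 1 < δb) (hδb3 : δb < 3)
    (hBern : ∀ n : ℕ, G n ≤ CB * ∑ p ∈ Finset.Icc (-1 : ℤ) n, ((2 : ℝ) ^ p) ^ (1 + 3 / r) * a p) :
    LambdaB L c μ r δ a G ≤ 1 + 2 *
      (ENNReal.ofReal (dyadicConst L c δ CB (3 - δb)) *
          (sumQ fun p => ENNReal.ofReal (((2 : ℝ) ^ p) ^ (-1 + δb + 6 / r) * a p ^ 2)) /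
        ENNReal.ofReal μ ^ 2) ^ (1 / (δb - 1)) :=
  sInf_two_pow_le _ fun _ hq => two_pow_le_rpow_of_ofReal_le hμ (by linarith)
    (ofReal_le_mul_sumQ_of_not_goodB hL hc hμ.le hgap hδb3 hBern hq)

end Magnetic

theorem lintegral_rpow_le_of_lt_one {α : Type*} [MeasurableSpace α] {μ : Measure α} {f : α → ℝ≥0∞}
    (hf : AEMeasurable f μ) {e : ℝ} (he0 : 0 < e) (he1 : e < 1) :
    ∫⁻ x, f x ^ e ∂μ ≤ (∫⁻ x, f x ∂μ) ^ e * μ Set.univ ^ (1 - e) := by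
  have hpq : e⁻¹.HolderConjugate (1 - e)⁻¹ := by
    rw [Real.holderConjugate_iff, inv_inv, inv_inv]
    exact ⟨(one_lt_inv₀ he0).2 he1, by ring⟩
  simpa [ENNReal.rpow_rpow_inv he0.ne'] using
    ENNReal.lintegral_mul_le_Lp_mul_Lq μ hpq (hf.pow_const e) (aemeasurable_const (b := 1))

section TimeAverage

variable {t₀ T : ℝ}

theorem timeAvg_mono {f g : ℝ → ℝ≥0∞} (h : ∀ t ∈ Set.Icc t₀ (t₀ + T), f t ≤ g t) :
    timeAvg t₀ T f ≤ timeAvg t₀ T g :=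
  ENNReal.div_le_div_right (setLIntegral_mono' measurableSet_Icc h) _

theorem timeAvg_const (hT : 0 < T) (a : ℝ≥0∞) : timeAvg t₀ T (fun _ => a) = a := by
  rw [timeAvg, setLIntegral_const, Real.volume_Icc, add_sub_cancel_left,
    ENNReal.mul_div_cancel_right (by simpa using hT) ENNReal.ofReal_ne_top]

theorem timeAvg_add {f : ℝ → ℝ≥0∞} (hf : Measurable f) (g : ℝ → ℝ≥0∞) :
    timeAvg t₀ T (fun t => f t + g t) = timeAvg t₀ T f + timeAvg t₀ T g := by
  rw [timeAvg, lintegral_add_left hf, ENNReal.add_div, timeAvg, timeAvg]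

theorem timeAvg_const_mul (a : ℝ≥0∞) {f : ℝ → ℝ≥0∞} (hf : Measurable f) :
    timeAvg t₀ T (fun t => a * f t) = a * timeAvg t₀ T f := by
  rw [timeAvg, lintegral_const_mul a hf, timeAvg, mul_div_assoc]

theorem timeAvg_rpow_le (hT : 0 < T) {f : ℝ → ℝ≥0∞} (hf : Measurable f) {e : ℝ}
    (he0 : 0 < e) (he1 : e < 1) : timeAvg t₀ T (fun t => f t ^ e) ≤ timeAvg t₀ T f ^ e := by
  have hT' : ENNReal.ofReal T ≠ 0 := by simpa using hT
  have hvol := lintegral_rpow_le_of_lt_one (μ := volume.restrict (Set.Icc t₀ (t₀ + T)))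
    hf.aemeasurable he0 he1
  rw [Measure.restrict_apply_univ, Real.volume_Icc, add_sub_cancel_left] at hvol
  calc timeAvg t₀ T (fun t => f t ^ e)
      ≤ (∫⁻ t in Set.Icc t₀ (t₀ + T), f t) ^ e * ENNReal.ofReal T ^ (1 - e) /
          ENNReal.ofReal T := ENNReal.div_le_div_right hvol _
    _ = timeAvg t₀ T f ^ e := by
      rw [timeAvg, ENNReal.div_rpow_of_nonneg _ _ he0.le, mul_div_assoc, div_eq_mul_inv _ (_ ^ e),
        ← ENNReal.rpow_neg, ENNReal.div_eq_inv_mul, ← ENNReal.rpow_neg_one,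
        ← ENNReal.rpow_add _ _ hT' ENNReal.ofReal_ne_top]
      ring_nf

theorem timeAvg_le_one_add_two_mul_rpow (hT : 0 < T) {e : ℝ} (he0 : 0 < e) (he1 : e < 1)
    {Λ h : ℝ → ℝ≥0∞} (hh : Measurable h)
    (hΛ : ∀ t ∈ Set.Icc t₀ (t₀ + T), Λ t ≤ 1 + 2 * h t ^ e) :
    timeAvg t₀ T Λ ≤ 1 + 2 * timeAvg t₀ T h ^ e :=
  calc timeAvg t₀ T Λ ≤ timeAvg t₀ T (fun t => 1 + 2 * h t ^ e) := timeAvg_mono hΛ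
    _ = 1 + 2 * timeAvg t₀ T (fun t => h t ^ e) := by
      rw [timeAvg_add measurable_const, timeAvg_const hT, timeAvg_const_mul _ (hh.pow_const e)]
    _ ≤ 1 + 2 * timeAvg t₀ T h ^ e := by gcongr; exact timeAvg_rpow_le hT hh he0 he1

theorem timeAvg_le_of_rpow_bound {α K CI ν : ℝ} (hT : 0 < T) (hα : 1 < α) (hK : 0 ≤ K)
    (hν : 0 < ν) {Λ S : ℝ → ℝ≥0∞} {E : ℝ≥0∞} (hS : Measurable S)
    (hΛ : ∀ t ∈ Set.Icc t₀ (t₀ + T),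
      Λ t ≤ 1 + 2 * (ENNReal.ofReal K * S t / ENNReal.ofReal ν ^ 2) ^ (1 / α))
    (hSE : timeAvg t₀ T S ≤ ENNReal.ofReal CI * E) :
    timeAvg t₀ T Λ ≤ 1 + ENNReal.ofReal (2 * max (K * CI) 1) *
      (ENNReal.ofReal ν * E / ENNReal.ofReal ν ^ 3) ^ (1 / α) := by
  have he0 : 0 < 1 / α := by positivity
  have he1 : 1 / α < 1 := (div_lt_one (by linarith)).2 hα
  set k := ENNReal.ofReal K / ENNReal.ofReal ν ^ 2
  have hν' : ENNReal.ofReal ν ≠ 0 := by simpa using hν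
  have hE : E / ENNReal.ofReal ν ^ 2 = ENNReal.ofReal ν * E / ENNReal.ofReal ν ^ 3 := by
    rw [pow_succ' _ 2, ENNReal.mul_div_mul_left _ _ hν' ENNReal.ofReal_ne_top]
  have hconst : (ENNReal.ofReal K * ENNReal.ofReal CI) ^ (1 / α) ≤
      ENNReal.ofReal (max (K * CI) 1) := by
    have hone : 1 ≤ ENNReal.ofReal (max (K * CI) 1) := by simp
    rw [← ENNReal.ofReal_mul hK]
    calc ENNReal.ofReal (K * CI) ^ (1 / α) ≤ ENNReal.ofReal (max (K * CI) 1) ^ (1 / α) := by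
          gcongr; exact le_max_left _ _
      _ ≤ ENNReal.ofReal (max (K * CI) 1) ^ (1 : ℝ) :=
          ENNReal.rpow_le_rpow_of_exponent_le hone he1.le
      _ = ENNReal.ofReal (max (K * CI) 1) := ENNReal.rpow_one _
  calc timeAvg t₀ T Λ ≤ 1 + 2 * timeAvg t₀ T (fun t => k * S t) ^ (1 / α) :=
        timeAvg_le_one_add_two_mul_rpow hT he0 he1 (hS.const_mul k)
          fun t ht => (hΛ t ht).trans_eq (by simp only [k, div_eq_mul_inv, mul_right_comm])
    _ ≤ 1 + 2 * (k * (ENNReal.ofReal CI * E)) ^ (1 / α) := by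
        rw [timeAvg_const_mul k hS]; gcongr
    _ = 1 + 2 * ((ENNReal.ofReal K * ENNReal.ofReal CI) ^ (1 / α) *
          (ENNReal.ofReal ν * E / ENNReal.ofReal ν ^ 3) ^ (1 / α)) := by
        rw [← hE, ← ENNReal.mul_rpow_of_nonneg _ _ he0.le]
        simp only [k, div_eq_mul_inv]
        ring_nf
    _ ≤ 1 + ENNReal.ofReal (2 * max (K * CI) 1) *
          (ENNReal.ofReal ν * E / ENNReal.ofReal ν ^ 3) ^ (1 / α) := by
        rw [ENNReal.ofReal_mul zero_le_two, ENNReal.ofReal_ofNat, mul_assoc]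
        exact add_le_add_right (mul_le_mul_right (mul_le_mul_left hconst _) _) _

end TimeAverage

theorem avg_wavenumbers_hall_mhd_general
    (L r c σ δ δu δb CB CI : ℝ)
    (hL : 1 ≤ L) (hc : 0 < c)
    (hσ0 : 0 < σ)
    (hδu1 : 2 * σ + 1 < δu) (hδu3 : δu < 3)
    (hδb1 : max 2 (2 * δ + 1) < δb) (hδb3 : δb < 3) :
    ∃ C : ℝ, 0 < C ∧
      ∀ (ν μ T t₀ : ℝ) (au Gu ab Gb eu eb : ℤ → ℝ → ℝ),
        0 < ν → 0 < μ → 0 < T →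
        (∀ q : ℤ, -1 ≤ q → Measurable (au q)) →
        (∀ q : ℤ, -1 ≤ q → Measurable (Gu q)) →
        (∀ q : ℤ, -1 ≤ q → Measurable (ab q)) →
        (∀ q : ℤ, -1 ≤ q → Measurable (Gb q)) →
        (∀ q : ℤ, -1 ≤ q → Measurable (eu q)) →
        (∀ q : ℤ, -1 ≤ q → Measurable (eb q)) →
        (∀ q : ℤ, -1 ≤ q → ∀ t ∈ Set.Icc t₀ (t₀ + T), 0 ≤ au q t) →
        (∀ q : ℤ, -1 ≤ q → ∀ t ∈ Set.Icc t₀ (t₀ + T), 0 ≤ Gu q t) →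
        (∀ q : ℤ, -1 ≤ q → ∀ t ∈ Set.Icc t₀ (t₀ + T), 0 ≤ ab q t) →
        (∀ q : ℤ, -1 ≤ q → ∀ t ∈ Set.Icc t₀ (t₀ + T), 0 ≤ Gb q t) →
        (∀ q : ℤ, -1 ≤ q → ∀ t ∈ Set.Icc t₀ (t₀ + T), 0 ≤ eu q t) →
        (∀ q : ℤ, -1 ≤ q → ∀ t ∈ Set.Icc t₀ (t₀ + T), 0 ≤ eb q t) →
        -- Bernstein-type bounds for every `q ≥ -1` and every `t`
        (∀ q : ℤ, -1 ≤ q → ∀ t ∈ Set.Icc t₀ (t₀ + T),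
            Gu q t ≤ CB * ∑ p ∈ Finset.Icc (-1 : ℤ) q, (2:ℝ) ^ p * au p t) →
        (∀ q : ℤ, -1 ≤ q → ∀ t ∈ Set.Icc t₀ (t₀ + T),
            Gb q t ≤ CB * ∑ p ∈ Finset.Icc (-1 : ℤ) q,
              ((2:ℝ) ^ p) ^ (1 + 3 / r) * ab p t) →
        -- measurability of `t ↦ Λ_u(t)` and `t ↦ Λ_b(t)`
        Measurable (fun t => LambdaU L c ν σ (fun q => au q t) (fun q => Gu q t)) →
        Measurable (fun t => LambdaB L c μ r δ (fun q => ab q t) (fun q => Gb q t)) →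
        -- finiteness of `⟨Σ_{q≥-1} λ_q² e^u_q⟩` and `⟨Σ_{q≥-1} λ_q² e^b_q⟩`
        timeAvg t₀ T (fun t => sumQ fun q =>
            ENNReal.ofReal (((2:ℝ) ^ q) ^ 2 * eu q t)) ≠ ⊤ →
        timeAvg t₀ T (fun t => sumQ fun q =>
            ENNReal.ofReal (((2:ℝ) ^ q) ^ 2 * eb q t)) ≠ ⊤ →
        -- intermittency relations
        timeAvg t₀ T (fun t => sumQ fun q =>
            ENNReal.ofReal (((2:ℝ) ^ q) ^ (-1 + δu) * au q t ^ 2)) ≤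
          ENNReal.ofReal CI *
            timeAvg t₀ T (fun t => sumQ fun q =>
              ENNReal.ofReal (((2:ℝ) ^ q) ^ 2 * eu q t)) →
        timeAvg t₀ T (fun t => sumQ fun q =>
            ENNReal.ofReal (((2:ℝ) ^ q) ^ (-1 + δb + 6 / r) * ab q t ^ 2)) ≤
          ENNReal.ofReal CI *
            timeAvg t₀ T (fun t => sumQ fun q =>
              ENNReal.ofReal (((2:ℝ) ^ q) ^ 2 * eb q t)) →
        -- conclusions: `⟨Λ_u⟩ ≤ 1 + C κ_u` and `⟨Λ_b⟩ ≤ 1 + C κ_e`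
        (timeAvg t₀ T (fun t => LambdaU L c ν σ (fun q => au q t) (fun q => Gu q t)) ≤
            1 + ENNReal.ofReal C *
              ((ENNReal.ofReal ν *
                  timeAvg t₀ T (fun t => sumQ fun q =>
                    ENNReal.ofReal (((2:ℝ) ^ q) ^ 2 * eu q t)) /
                ENNReal.ofReal ν ^ 3) ^ (1 / (1 + δu)))) ∧
          (timeAvg t₀ T (fun t => LambdaB L c μ r δ (fun q => ab q t) (fun q => Gb q t)) ≤
            1 + ENNReal.ofReal C *
              ((ENNReal.ofReal μ *
                  timeAvg t₀ T (fun t => sumQ fun q =>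
                    ENNReal.ofReal (((2:ℝ) ^ q) ^ 2 * eb q t)) /
                ENNReal.ofReal μ ^ 3) ^ (1 / (δb - 1)))) := by
  obtain ⟨hδb2, hδbgap⟩ := max_lt_iff.1 hδb1
  have hL0 : 0 ≤ L := by linarith
  set Ku := dyadicConst L c σ CB (3 - δu)
  set Kb := dyadicConst L c δ CB (3 - δb)
  refine ⟨2 * max (Ku * CI) 1 + 2 * max (Kb * CI) 1, by positivity, ?_⟩
  intro ν μ T t₀ au Gu ab Gb eu eb hν hμ hT hau _ hab _ _ _ _ _ _ _ _ _ hBu hBb _ _ _ _ hIu hIb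
  constructor
  · refine (timeAvg_le_of_rpow_bound hT (by linarith) (dyadicConst_nonneg (by linarith)) hν
      (measurable_sumQ fun q hq => ((hau q hq).pow_const 2).const_mul _ |>.ennreal_ofReal)
      (fun t ht => LambdaU_le hL0 hc hν hσ0.le hδu1.le hδu3 fun n => hBu n (by omega) t ht)
      hIu).trans ?_
    gcongr
    exact le_add_of_nonneg_right (by positivity)
  · refine (timeAvg_le_of_rpow_bound hT (by linarith) (dyadicConst_nonneg (by linarith)) hμ
      (measurable_sumQ fun q hq => ((hab q hq).pow_const 2).const_mul _ |>.ennreal_ofReal)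
      (fun t ht => LambdaB_le hL0 hc hμ hδbgap.le (by linarith) hδb3
        fun n => hBb n (by omega) t ht) hIb).trans ?_
    gcongr
    exact le_add_of_nonneg_left (by positivity)

/-- the time-averaged velocity and magnetic determining wavenumbers for
Hall-MHD are bounded by the phenomenological dissipation wavenumbers:
`⟨Λ_u⟩ ≤ 1 + C κ_u` and `⟨Λ_b⟩ ≤ 1 + C κ_e`, where
`κ_u = (ε_u/ν³)^{1/(1+δ_u)}`, `ε_u = ν ⟨Σ_{q≥-1} λ_q² e^u_q⟩`,
`κ_e = (ε_b/μ³)^{1/(δ_b-1)}`, `ε_b = μ ⟨Σ_{q≥-1} λ_q² e^b_q⟩`, under the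
scale-localized intermittency assumptions. -/
theorem avg_wavenumbers_hall_mhd
    (L r c σ δ δu δb CB CI : ℝ)
    (hL : 1 ≤ L) (hr : 0 < r) (hc : 0 < c) (hCB : 0 < CB) (hCI : 0 < CI)
    (hσ0 : 0 < σ) (hσ1 : σ < 1) (hδ0 : 0 < δ) (hδ1 : δ < 1)
    (hδu1 : 2 * σ + 1 < δu) (hδu3 : δu < 3)
    (hδb1 : max 2 (2 * δ + 1) < δb) (hδb3 : δb < 3) :
    ∃ C : ℝ, 0 < C ∧
      ∀ (ν μ T t₀ : ℝ) (au Gu ab Gb eu eb : ℤ → ℝ → ℝ),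
        0 < ν → 0 < μ → 0 < T →
        (∀ q : ℤ, -1 ≤ q → Measurable (au q)) →
        (∀ q : ℤ, -1 ≤ q → Measurable (Gu q)) →
        (∀ q : ℤ, -1 ≤ q → Measurable (ab q)) →
        (∀ q : ℤ, -1 ≤ q → Measurable (Gb q)) →
        (∀ q : ℤ, -1 ≤ q → Measurable (eu q)) →
        (∀ q : ℤ, -1 ≤ q → Measurable (eb q)) →
        (∀ q : ℤ, -1 ≤ q → ∀ t ∈ Set.Icc t₀ (t₀ + T), 0 ≤ au q t) →
        (∀ q : ℤ, -1 ≤ q → ∀ t ∈ Set.Icc t₀ (t₀ + T), 0 ≤ Gu q t) →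
        (∀ q : ℤ, -1 ≤ q → ∀ t ∈ Set.Icc t₀ (t₀ + T), 0 ≤ ab q t) →
        (∀ q : ℤ, -1 ≤ q → ∀ t ∈ Set.Icc t₀ (t₀ + T), 0 ≤ Gb q t) →
        (∀ q : ℤ, -1 ≤ q → ∀ t ∈ Set.Icc t₀ (t₀ + T), 0 ≤ eu q t) →
        (∀ q : ℤ, -1 ≤ q → ∀ t ∈ Set.Icc t₀ (t₀ + T), 0 ≤ eb q t) →
        -- Bernstein-type bounds for every `q ≥ -1` and every `t`
        (∀ q : ℤ, -1 ≤ q → ∀ t ∈ Set.Icc t₀ (t₀ + T),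
            Gu q t ≤ CB * ∑ p ∈ Finset.Icc (-1 : ℤ) q, (2:ℝ) ^ p * au p t) →
        (∀ q : ℤ, -1 ≤ q → ∀ t ∈ Set.Icc t₀ (t₀ + T),
            Gb q t ≤ CB * ∑ p ∈ Finset.Icc (-1 : ℤ) q,
              ((2:ℝ) ^ p) ^ (1 + 3 / r) * ab p t) →
        -- measurability of `t ↦ Λ_u(t)` and `t ↦ Λ_b(t)`
        Measurable (fun t => LambdaU L c ν σ (fun q => au q t) (fun q => Gu q t)) →
        Measurable (fun t => LambdaB L c μ r δ (fun q => ab q t) (fun q => Gb q t)) →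
        -- finiteness of `⟨Σ_{q≥-1} λ_q² e^u_q⟩` and `⟨Σ_{q≥-1} λ_q² e^b_q⟩`
        timeAvg t₀ T (fun t => sumQ fun q =>
            ENNReal.ofReal (((2:ℝ) ^ q) ^ 2 * eu q t)) ≠ ⊤ →
        timeAvg t₀ T (fun t => sumQ fun q =>
            ENNReal.ofReal (((2:ℝ) ^ q) ^ 2 * eb q t)) ≠ ⊤ →
        -- intermittency relations
        timeAvg t₀ T (fun t => sumQ fun q =>
            ENNReal.ofReal (((2:ℝ) ^ q) ^ (-1 + δu) * au q t ^ 2)) ≤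
          ENNReal.ofReal CI *
            timeAvg t₀ T (fun t => sumQ fun q =>
              ENNReal.ofReal (((2:ℝ) ^ q) ^ 2 * eu q t)) →
        timeAvg t₀ T (fun t => sumQ fun q =>
            ENNReal.ofReal (((2:ℝ) ^ q) ^ (-1 + δb + 6 / r) * ab q t ^ 2)) ≤
          ENNReal.ofReal CI *
            timeAvg t₀ T (fun t => sumQ fun q =>
              ENNReal.ofReal (((2:ℝ) ^ q) ^ 2 * eb q t)) →
        -- conclusions: `⟨Λ_u⟩ ≤ 1 + C κ_u` and `⟨Λ_b⟩ ≤ 1 + C κ_e`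
        (timeAvg t₀ T (fun t => LambdaU L c ν σ (fun q => au q t) (fun q => Gu q t)) ≤
            1 + ENNReal.ofReal C *
              ((ENNReal.ofReal ν *
                  timeAvg t₀ T (fun t => sumQ fun q =>
                    ENNReal.ofReal (((2:ℝ) ^ q) ^ 2 * eu q t)) /
                ENNReal.ofReal ν ^ 3) ^ (1 / (1 + δu)))) ∧
          (timeAvg t₀ T (fun t => LambdaB L c μ r δ (fun q => ab q t) (fun q => Gb q t)) ≤
            1 + ENNReal.ofReal C *
              ((ENNReal.ofReal μ *
                  timeAvg t₀ T (fun t => sumQ fun q =>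
                    ENNReal.ofReal (((2:ℝ) ^ q) ^ 2 * eb q t)) /
                ENNReal.ofReal μ ^ 3) ^ (1 / (δb - 1)))) :=
  avg_wavenumbers_hall_mhd_general L r c σ δ δu δb CB CI hL hc hσ0 hδu1 hδu3 hδb1 hδb3
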